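/- arXiv:2312.10846 — 2 statements merged into one kernel-verified Lean document; each statement's English description precedes it below -/
import Mathlib

section
/- Let (X, X) and (Y, Y) be continuous biframe Bessel mappings for H with Bessel bounds D₁ and D₂ respectively, let m : Ω → ℂ be an essentially bounded measurable function, and let M_{m,X,Y} be the continuous biframe Bessel multiplier. Suppose α, β are real numbers with 1 − α > 0 and 1 + β > 0 such that ‖f − M_{m,X,Y} f‖ ≤ α·‖f‖ + β·‖M_{m,X,Y} f‖ for all f ∈ H. Then (X, X) is a continuous biframe for H with bounds ((1−α)/(‖m‖_∞·√D₂·(1+β)))² and D₁; that is, ((1−α)/(‖m‖_∞·√D₂·(1+β)))²·⟨f,f⟩ ≤ ∫_Ω ⟨f, X(ω)⟩⟨X(ω), f⟩ dμ(ω) ≤ D₁·⟨f,f⟩ for all f ∈ H. -/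
/-!
The triangle inequality turns the perturbation hypothesis into `(1 - α) ‖f‖ ≤ (1 + β) ‖M f‖`.
Since `⟪M f, M f⟫ = ∫ (m ω • ⟪f, X ω⟫) ⟪Y ω, M f⟫`, the Cauchy–Schwarz inequality for
`𝒜`-valued integrals and the Bessel bound of `Y` give
`‖M f‖ ^ 2 ≤ ‖m‖∞ ^ 2 D₂ ‖∫ ⟪f, X ω⟫ ⟪X ω, f⟫‖`, i.e. the lower frame inequality in norm form
`c ‖⟪f, f⟫‖ ≤ ‖∫ ⟪f, X ω⟫ ⟪X ω, f⟫‖`. Applied to `a • f` it reads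
`c ‖a ⟪f, f⟫ a⋆‖ ≤ ‖a (∫ ⟪f, X ω⟫ ⟪X ω, f⟫) a⋆‖` for every `a ∈ 𝒜`, and choosing
`a = (q + ε) ^ (-1/2)` with `q` the integral upgrades this to the order inequality.
-/

open MeasureTheory Filter Topology CFC

theorem Complex.smul_eq_re_smul_add_im_smul {M : Type*} [AddCommGroup M] [Module ℂ M]
    (c : ℂ) (x : M) : c • x = c.re • x + c.im • (I • x) := by
  conv_lhs => rw [← re_add_im c]
  rw [add_smul, mul_smul, coe_smul, coe_smul]

theorem star_I_smul_one {A : Type*} [Ring A] [StarRing A] [Algebra ℂ A] [PartialOrder A]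
    [StarOrderedRing A] : star (Complex.I • (1 : A)) = -(Complex.I • 1) := by
  set v : A := Complex.I • 1
  have hv_left : ∀ y : A, v * y = Complex.I • y := fun y => by rw [smul_mul_assoc, one_mul]
  have hv_right : ∀ y : A, y * v = Complex.I • y := fun y => by rw [mul_smul_comm, mul_one]
  have hvv : v * v = -1 := by rw [hv_left, smul_smul, Complex.I_mul_I, neg_one_smul]
  have hsv_comm : ∀ y : A, star v * y = y * star v := fun y => by
    calc star v * y = star (star y * v) := by rw [star_mul, star_star]
      _ = star (v * star y) := by rw [hv_left, hv_right]
      _ = y * star v := by rw [star_mul, star_star]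
  have hww : star v * v * (star v * v) = 1 := by
    calc star v * v * (star v * v) = star v * (v * star v) * v := by noncomm_ring
      _ = star v * star v * (v * v) := by rw [← hsv_comm]; noncomm_ring
      _ = 1 := by rw [← star_mul, hvv, star_neg, star_one, neg_mul_neg, one_mul]
  set w := star v * v
  set x := 1 - w with hx_def
  have hx_sa : star x = x := by simp [x, w]
  have hxx : x * x = x + x := by
    calc x * x = 1 - w - w + w * w := by rw [hx_def]; noncomm_ring
      _ = x + x := by rw [hww, hx_def]; abel
  -- `w = v⋆ v ≥ 0` acts as `-1` on the range of `x`, so `x w x = -(x + x)` is nonnegative.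
  have hwx : w * x = -x := by
    calc w * x = w - w * w := by rw [hx_def]; noncomm_ring
      _ = -x := by rw [hww, hx_def]; abel
  have hx_nonneg : 0 ≤ x + x := by simpa [hx_sa, hxx] using star_mul_self_nonneg x
  have hx_nonpos : x + x ≤ 0 := by
    have h := star_mul_self_nonneg (v * x)
    rw [star_mul, hx_sa, mul_assoc, ← mul_assoc (star v), hwx, mul_neg, hxx] at h
    exact neg_nonneg.mp h
  have hx : x = 0 := by
    have h2 : (2 : ℂ) • x = 0 := by rw [two_smul]; exact le_antisymm hx_nonpos hx_nonneg
    exact (smul_eq_zero.mp h2).resolve_left two_ne_zero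
  calc star v = w * -v := by rw [mul_assoc, mul_neg, hvv, neg_neg, mul_one]
    _ = -v := by rw [show w = 1 from (sub_eq_zero.mp hx).symm, one_mul]

/-- Nothing in `NormedAlgebra ℂ A` and `StarRing A` relates scalars to `star`; here the order
forces conjugate-linearity. -/
theorem starModule_complex_of_starOrderedRing {A : Type*} [NormedRing A] [NormedAlgebra ℂ A]
    [StarRing A] [ContinuousStar A] [PartialOrder A] [StarOrderedRing A] : StarModule ℂ A where
  star_smul c y := by
    have star_real_smul (r : ℝ) (x : A) : star (r • x) = r • star x :=
      map_real_smul (starAddEquiv : A ≃+ A) continuous_star r x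
    have hc : star (c • (1 : A)) = star c • 1 := by
      rw [Complex.smul_eq_re_smul_add_im_smul c, Complex.smul_eq_re_smul_add_im_smul (star c),
        star_add, star_real_smul, star_real_smul, star_I_smul_one, star_one]
      simp [smul_neg]
    rw [← one_mul y, ← smul_mul_assoc, star_mul, hc, mul_smul_comm, mul_one, one_mul]

section StarIntegral

variable {E : Type*} [NormedAddCommGroup E] [NormedSpace ℝ E] [StarAddMonoid E]
  [StarModule ℝ E] [ContinuousStar E] {Ω : Type*} [MeasurableSpace Ω] {μ : Measure Ω}

theorem integral_star (g : Ω → E) : ∫ ω, star (g ω) ∂μ = star (∫ ω, g ω ∂μ) :=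
  (starL' ℝ (A := E)).integral_comp_comm g

theorem MeasureTheory.Integrable.star {g : Ω → E} (hg : Integrable g μ) :
    Integrable (fun ω => star (g ω)) μ :=
  ((starL' ℝ (A := E)) : E →L[ℝ] E).integrable_comp hg

end StarIntegral

theorem ae_norm_le_toReal_eLpNormEssSup {Ω E : Type*} [MeasurableSpace Ω] {μ : Measure Ω}
    [NormedAddCommGroup E] {f : Ω → E} (hf : eLpNormEssSup f μ ≠ ⊤) :
    ∀ᵐ ω ∂μ, ‖f ω‖ ≤ (eLpNormEssSup f μ).toReal := by
  filter_upwards [ae_le_eLpNormEssSup (f := f)] with ω hω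
  simpa using ENNReal.toReal_mono hf hω

theorem one_sub_mul_norm_le_one_add_mul_norm {E : Type*} [SeminormedAddCommGroup E] {f u : E}
    {α β : ℝ} (h : ‖f - u‖ ≤ α * ‖f‖ + β * ‖u‖) : (1 - α) * ‖f‖ ≤ (1 + β) * ‖u‖ := by
  linarith [norm_sub_norm_le f u]

theorem div_sq_mul_sq_le_of_mul_le_of_sq_le {a b K D x y z : ℝ} (ha : 0 ≤ a) (hx : 0 ≤ x)
    (hD : 0 ≤ D) (hz : 0 ≤ z) (h₁ : a * x ≤ b * y) (h₂ : y ^ 2 ≤ K ^ 2 * D * z) :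
    (a / (K * √D * b)) ^ 2 * x ^ 2 ≤ z := by
  rcases eq_or_ne (K * √D * b) 0 with h₀ | h₀
  · simpa [h₀] using hz
  rw [div_pow, div_mul_eq_mul_div, div_le_iff₀ (by positivity), mul_pow, mul_pow,
    Real.sq_sqrt hD]
  calc a ^ 2 * x ^ 2 = (a * x) ^ 2 := by ring
    _ ≤ (b * y) ^ 2 := pow_le_pow_left₀ (mul_nonneg ha hx) h₁ 2
    _ = b ^ 2 * y ^ 2 := by ring
    _ ≤ b ^ 2 * (K ^ 2 * D * z) := by gcongr
    _ = z * (K ^ 2 * D * b ^ 2) := by ring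

theorem inn_smul_right {A H : Type*} [Mul A] [StarMul A] [SMul A H] (inn : H → H → A)
    (inn_smul_left : ∀ (a : A) (x z : H), inn (a • x) z = a * inn x z)
    (inn_conj_symm : ∀ x y, inn x y = star (inn y x)) (a : A) (x y : H) :
    inn x (a • y) = inn x y * star a := by
  rw [inn_conj_symm, inn_smul_left, star_mul, ← inn_conj_symm]

section CStarAlgebra

variable {A : Type*} [CStarAlgebra A] {Ω : Type*} [MeasurableSpace Ω] {μ : Measure Ω}

theorem integral_inn_smul_mul_inn_smul {H : Type*} [SMul A H] (inn : H → H → A)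
    (inn_smul_left : ∀ (a : A) (x z : H), inn (a • x) z = a * inn x z)
    (inn_conj_symm : ∀ x y, inn x y = star (inn y x)) {X : Ω → H} {f : H}
    (hX : Integrable (fun ω => inn f (X ω) * inn (X ω) f) μ) (a : A) :
    ∫ ω, inn (a • f) (X ω) * inn (X ω) (a • f) ∂μ =
      a * (∫ ω, inn f (X ω) * inn (X ω) f ∂μ) * star a := by
  have hpt : ∀ z, inn (a • f) z * inn z (a • f) = a * (inn f z * inn z f) * star a := fun z => by
    simp only [inn_smul_left, inn_smul_right inn inn_smul_left inn_conj_symm, mul_assoc]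
  simp only [hpt]
  rw [integral_mul_const_of_integrable (hX.const_mul a), integral_const_mul_of_integrable hX]

variable [PartialOrder A] [StarOrderedRing A]

theorem smul_le_of_forall_norm_conj_le {p q : A} (hp : 0 ≤ p) (hq : 0 ≤ q) {c : ℝ} (hc : 0 ≤ c)
    (h : ∀ a : A, c * ‖a * p * star a‖ ≤ ‖a * q * star a‖) : c • p ≤ q := by
  have approx : ∀ ε > (0 : ℝ), c • p ≤ q + algebraMap ℝ A ε := by
    intro ε hε
    set r := q + algebraMap ℝ A ε
    have hr : IsStrictlyPositive r :=
      IsStrictlyPositive.nonneg_add hq (isStrictlyPositive_algebraMap hε)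
    set s : A := r ^ (-(1 / 2) : ℝ)
    have hs_sa : star s = s := (rpow_nonneg (a := r)).isSelfAdjoint.star_eq
    have hsrs : s * r * s = 1 := conjugate_rpow_neg_one_half r
    have hsqs : ‖s * q * s‖ ≤ 1 := by
      have hsqs_nonneg : 0 ≤ s * q * s := by simpa [hs_sa] using star_left_conjugate_nonneg hq s
      rw [CStarAlgebra.norm_le_one_iff_of_nonneg _ hsqs_nonneg, ← hsrs]
      simpa [hs_sa] using
        star_left_conjugate_le_conjugate (le_add_of_nonneg_right (algebraMap_nonneg A hε.le)) s
    have hsps : c • (s * p * s) ≤ 1 := by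
      have hsps_nonneg : 0 ≤ s * p * s := by simpa [hs_sa] using star_left_conjugate_nonneg hp s
      calc c • (s * p * s) ≤ c • algebraMap ℝ A ‖s * p * s‖ :=
            smul_le_smul_of_nonneg_left IsSelfAdjoint.le_algebraMap_norm_self hc
        _ = algebraMap ℝ A (c * ‖s * p * s‖) := by rw [map_mul, Algebra.smul_def]
        _ ≤ algebraMap ℝ A 1 := by
            gcongr
            simpa only [hs_sa] using (h s).trans (hs_sa.symm ▸ hsqs)
        _ = 1 := map_one _
    have hs_unit : IsUnit s := (IsStrictlyPositive.rpow r (-(1 / 2)) hr).isUnit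
    rw [← sub_nonneg, ← hs_unit.star_left_conjugate_nonneg_iff, hs_sa]
    simpa [mul_sub, sub_mul, hsrs] using hsps
  have hlim : Tendsto (fun ε : ℝ => q + algebraMap ℝ A ε) (𝓝[>] 0) (𝓝 q) := by
    have := ((continuous_algebraMap ℝ A).tendsto 0).const_add q
    simpa using this.mono_left nhdsWithin_le_nhds
  exact ge_of_tendsto hlim (eventually_mem_nhdsWithin.mono approx)

theorem zero_le_integral_mul_star_expansion {h k : Ω → A}
    (Hhh : Integrable (fun ω => h ω * star (h ω)) μ)
    (Hkk : Integrable (fun ω => k ω * star (k ω)) μ)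
    (Hhk : Integrable (fun ω => h ω * star (k ω)) μ) (c : A) (s : ℝ) :
    0 ≤ c * (∫ ω, h ω * star (h ω) ∂μ) * star c - s • (c * ∫ ω, h ω * star (k ω) ∂μ)
      - s • (star (∫ ω, h ω * star (k ω) ∂μ) * star c) + s ^ 2 • ∫ ω, k ω * star (k ω) ∂μ := by
  have Hkh : Integrable (fun ω => k ω * star (h ω)) μ := by
    simpa only [star_mul, star_star] using Hhk.star
  have hkh : ∫ ω, k ω * star (h ω) ∂μ = star (∫ ω, h ω * star (k ω) ∂μ) := by
    simp only [← integral_star, star_mul, star_star]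
  have hexpand : ∀ ω, (c * h ω - s • k ω) * star (c * h ω - s • k ω) =
      c * (h ω * star (h ω)) * star c - s • (c * (h ω * star (k ω)))
        - s • (k ω * star (h ω) * star c) + s ^ 2 • (k ω * star (k ω)) := fun ω => by
    simp only [star_sub, star_mul, star_smul, star_trivial, sub_mul, mul_sub, smul_sub,
      smul_mul_assoc, mul_smul_comm, smul_smul, mul_assoc, sq]
    abel
  calc (0 : A) ≤ ∫ ω, (c * h ω - s • k ω) * star (c * h ω - s • k ω) ∂μ :=
        integral_nonneg fun ω => mul_star_self_nonneg _
    _ = _ := by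
      have I1 := (Hhh.const_mul c).mul_const (star c)
      have I2 := (Hhk.const_mul c).smul s
      have I3 := (Hkh.mul_const (star c)).smul s
      simp only [hexpand]
      rw [integral_add, integral_sub, integral_sub,
        integral_smul, integral_smul, integral_smul,
        integral_mul_const_of_integrable (Hhh.const_mul c), integral_const_mul_of_integrable Hhh,
        integral_const_mul_of_integrable Hhk, integral_mul_const_of_integrable Hkh, hkh]
      exacts [I1, I2, I1.sub I2, I3, (I1.sub I2).sub I3, Hkk.smul (s ^ 2)]

theorem norm_integral_mul_star_sq_le {h k : Ω → A}
    (Hhh : Integrable (fun ω => h ω * star (h ω)) μ)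
    (Hkk : Integrable (fun ω => k ω * star (k ω)) μ)
    (Hhk : Integrable (fun ω => h ω * star (k ω)) μ) :
    ‖∫ ω, h ω * star (k ω) ∂μ‖ ^ 2 ≤
      ‖∫ ω, h ω * star (h ω) ∂μ‖ * ‖∫ ω, k ω * star (k ω) ∂μ‖ := by
  set P := ∫ ω, h ω * star (h ω) ∂μ
  set Q := ∫ ω, k ω * star (k ω) ∂μ
  set v := ∫ ω, h ω * star (k ω) ∂μ
  have hP : 0 ≤ P := integral_nonneg fun ω => mul_star_self_nonneg _
  -- Taking `s > ‖P‖` rather than `s = ‖P‖` spares a separate treatment of `P = 0`.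
  have bound : ∀ s > ‖P‖, ‖v‖ ^ 2 ≤ s * ‖Q‖ := by
    intro s hs
    have hs0 : 0 < s := (norm_nonneg P).trans_lt hs
    have hexp := zero_le_integral_mul_star_expansion Hhh Hkk Hhk (star v) s
    rw [star_star] at hexp
    have hconj : star v * P * v ≤ s • (star v * v) :=
      (CStarAlgebra.star_left_conjugate_le_norm_smul (IsSelfAdjoint.of_nonneg hP)).trans
        (smul_le_smul_of_nonneg_right hs.le (star_mul_self_nonneg v))
    have hle : s • (star v * v) ≤ s • (s • Q) := by
      rw [← sub_nonneg, smul_smul, ← sq]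
      calc (0 : A) ≤ star v * P * v - s • (star v * v) - s • (star v * v) + s ^ 2 • Q := hexp
        _ ≤ s • (star v * v) - s • (star v * v) - s • (star v * v) + s ^ 2 • Q := by gcongr
        _ = s ^ 2 • Q - s • (star v * v) := by abel
    calc ‖v‖ ^ 2 = ‖star v * v‖ := by rw [CStarRing.norm_star_mul_self, sq]
      _ ≤ ‖s • Q‖ := CStarAlgebra.norm_le_norm_of_nonneg_of_le (star_mul_self_nonneg v)
          ((smul_le_smul_iff_of_pos_left hs0).mp hle)
      _ = s * ‖Q‖ := by rw [norm_smul, Real.norm_of_nonneg hs0.le]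
  have hlim : Tendsto (fun s : ℝ => s * ‖Q‖) (𝓝[>] ‖P‖) (𝓝 (‖P‖ * ‖Q‖)) :=
    ((continuous_mul_const ‖Q‖).tendsto _).mono_left nhdsWithin_le_nhds
  exact ge_of_tendsto hlim (eventually_mem_nhdsWithin.mono bound)

theorem norm_integral_smul_mul_star_sq_le {a b : Ω → A} {m : Ω → ℂ} {K : ℝ}
    (hm : AEStronglyMeasurable m μ) (hK : ∀ᵐ ω ∂μ, ‖m ω‖ ≤ K)
    (Ha : Integrable (fun ω => a ω * star (a ω)) μ)
    (Hb : Integrable (fun ω => b ω * star (b ω)) μ)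
    (Hab : Integrable (fun ω => m ω • (a ω * star (b ω))) μ) :
    ‖∫ ω, m ω • (a ω * star (b ω)) ∂μ‖ ^ 2 ≤
      K ^ 2 * ‖∫ ω, a ω * star (a ω) ∂μ‖ * ‖∫ ω, b ω * star (b ω) ∂μ‖ := by
  have hmm : ∀ ω, (m ω • a ω) * star (m ω • a ω) = ‖m ω‖ ^ 2 • (a ω * star (a ω)) := fun ω => by
    rw [star_smul, smul_mul_smul_comm, Complex.star_def, Complex.mul_conj,
      Complex.normSq_eq_norm_sq, Complex.coe_smul]
  have hm_sq : ∀ᵐ ω ∂μ, ‖‖m ω‖ ^ 2‖ ≤ K ^ 2 := hK.mono fun ω hω => by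
    rw [norm_pow, norm_norm]
    exact pow_le_pow_left₀ (norm_nonneg _) hω 2
  have Hma : Integrable (fun ω => (m ω • a ω) * star (m ω • a ω)) μ :=
    (Ha.bdd_smul (K ^ 2) (hm.norm.pow 2) hm_sq).congr (ae_of_all _ fun ω => (hmm ω).symm)
  have hweight : ∫ ω, (m ω • a ω) * star (m ω • a ω) ∂μ ≤ K ^ 2 • ∫ ω, a ω * star (a ω) ∂μ := by
    rw [← integral_smul]
    refine integral_mono_ae Hma (Ha.smul _) (hm_sq.mono fun ω hω => ?_)
    dsimp only
    rw [hmm]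
    exact smul_le_smul_of_nonneg_right ((Real.le_norm_self _).trans hω) (mul_star_self_nonneg _)
  calc ‖∫ ω, m ω • (a ω * star (b ω)) ∂μ‖ ^ 2
      = ‖∫ ω, (m ω • a ω) * star (b ω) ∂μ‖ ^ 2 := by simp only [smul_mul_assoc]
    _ ≤ ‖∫ ω, (m ω • a ω) * star (m ω • a ω) ∂μ‖ * ‖∫ ω, b ω * star (b ω) ∂μ‖ :=
        norm_integral_mul_star_sq_le Hma Hb (by simpa only [smul_mul_assoc] using Hab)
    _ ≤ K ^ 2 * ‖∫ ω, a ω * star (a ω) ∂μ‖ * ‖∫ ω, b ω * star (b ω) ∂μ‖ := by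
        gcongr
        calc _ ≤ ‖K ^ 2 • ∫ ω, a ω * star (a ω) ∂μ‖ := CStarAlgebra.norm_le_norm_of_nonneg_of_le
              (integral_nonneg fun ω => mul_star_self_nonneg _) hweight
          _ = K ^ 2 * ‖∫ ω, a ω * star (a ω) ∂μ‖ := by
              rw [norm_smul, Real.norm_of_nonneg (sq_nonneg K)]

theorem norm_inn_self_le_of_eq_integral {H : Type*} (inn : H → H → A)
    (inn_conj_symm : ∀ x y, inn x y = star (inn y x)) {X Y : Ω → H} {m : Ω → ℂ} {K D : ℝ}
    (hm : AEStronglyMeasurable m μ) (hK : ∀ᵐ ω ∂μ, ‖m ω‖ ≤ K) (hD : 0 ≤ D) {g u : H}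
    (hX : Integrable (fun ω => inn g (X ω) * inn (X ω) g) μ)
    (hY : Integrable (fun ω => inn u (Y ω) * inn (Y ω) u) μ)
    (hXY : Integrable (fun ω => m ω • (inn g (X ω) * inn (Y ω) u)) μ)
    (hYBessel : ∫ ω, inn u (Y ω) * inn (Y ω) u ∂μ ≤ D • inn u u)
    (hu : inn u u = ∫ ω, m ω • (inn g (X ω) * inn (Y ω) u) ∂μ) :
    ‖inn u u‖ ≤ K ^ 2 * D * ‖∫ ω, inn g (X ω) * inn (X ω) g ∂μ‖ := by
  simp only [inn_conj_symm (X _) g, inn_conj_symm (Y _) u] at hX hY hXY hYBessel hu ⊢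
  have hCS := norm_integral_smul_mul_star_sq_le hm hK hX hY hXY
  rw [← hu] at hCS
  have hBessel : ‖∫ ω, inn u (Y ω) * star (inn u (Y ω)) ∂μ‖ ≤ D * ‖inn u u‖ := by
    calc _ ≤ ‖D • inn u u‖ := CStarAlgebra.norm_le_norm_of_nonneg_of_le
          (integral_nonneg fun ω => mul_star_self_nonneg _) hYBessel
      _ = D * ‖inn u u‖ := by rw [norm_smul, Real.norm_of_nonneg hD]
  have hP := norm_nonneg (∫ ω, inn g (X ω) * star (inn g (X ω)) ∂μ)
  nlinarith [norm_nonneg (inn u u), mul_nonneg (mul_nonneg (sq_nonneg K) hD) hP,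
    mul_le_mul_of_nonneg_left hBessel (mul_nonneg (sq_nonneg K) hP)]

end CStarAlgebra

theorem biframe_of_multiplier_perturbation_general
    {𝒜 H Ω : Type*}
    -- `𝒜` is a unital C*-algebra
    [NormedRing 𝒜] [StarRing 𝒜] [CStarRing 𝒜] [NormedAlgebra ℂ 𝒜] [CompleteSpace 𝒜]
    [PartialOrder 𝒜] [StarOrderedRing 𝒜]
    -- `H` is a Hilbert C*-module over `𝒜`
    [NormedAddCommGroup H] [Module 𝒜 H]
    (inn : H → H → 𝒜)
    (inn_smul_left : ∀ (a : 𝒜) (x z : H), inn (a • x) z = a * inn x z)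
    (inn_conj_symm : ∀ x y : H, inn x y = star (inn y x))
    (inn_nonneg : ∀ x : H, 0 ≤ inn x x)
    (hnorm : ∀ x : H, ‖x‖ = Real.sqrt ‖inn x x‖)
    -- `(Ω, μ)` is a measure space
    [MeasurableSpace Ω] (μ : Measure Ω)
    (X Y : Ω → H)
    -- `(X, X)` and `(Y, Y)` are continuous biframe Bessel mappings with bounds `D₁, D₂`
    (D₁ D₂ : ℝ) (hD₂ : 0 < D₂)
    (hXBessel : ∀ f : H, ∫ ω, inn f (X ω) * inn (X ω) f ∂μ ≤ D₁ • inn f f)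
    (hYBessel : ∀ f : H, ∫ ω, inn f (Y ω) * inn (Y ω) f ∂μ ≤ D₂ • inn f f)
    -- `m : Ω → ℂ` is an essentially bounded measurable function
    (m : Ω → ℂ) (hm : AEStronglyMeasurable m μ) (hmbd : eLpNormEssSup m μ ≠ ⊤)
    -- all relevant integrands are Bochner integrable
    (hprodX : ∀ f : H, Integrable (fun ω => inn f (X ω) * inn (X ω) f) μ)
    (hprodY : ∀ f : H, Integrable (fun ω => inn f (Y ω) * inn (Y ω) f) μ)
    (hmint : ∀ f g : H, Integrable (fun ω => m ω • (inn f (X ω) * inn (Y ω) g)) μ)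
    -- the continuous biframe Bessel multiplier `M_{m,X,Y}` (weakly defined)
    (M : H → H)
    (hM : ∀ f g : H, inn (M f) g = ∫ ω, m ω • (inn f (X ω) * inn (Y ω) g) ∂μ)
    (α β : ℝ) (hα : 0 < 1 - α)
    (hpert : ∀ f : H, ‖f - M f‖ ≤ α * ‖f‖ + β * ‖M f‖) :
    ∀ f : H,
      (((1 - α) / ((eLpNormEssSup m μ).toReal * Real.sqrt D₂ * (1 + β))) ^ 2) • inn f f ≤
        ∫ ω, inn f (X ω) * inn (X ω) f ∂μ ∧
      ∫ ω, inn f (X ω) * inn (X ω) f ∂μ ≤ D₁ • inn f f := by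
  let : StarModule ℂ 𝒜 := starModule_complex_of_starOrderedRing
  let : CStarAlgebra 𝒜 := { ‹NormedRing 𝒜›, ‹StarRing 𝒜›, ‹CompleteSpace 𝒜›, ‹CStarRing 𝒜›,
    ‹NormedAlgebra ℂ 𝒜›, ‹StarModule ℂ 𝒜› with }
  have norm_inn_self : ∀ x, ‖inn x x‖ = ‖x‖ ^ 2 := fun x => by
    rw [hnorm, Real.sq_sqrt (norm_nonneg _)]
  have lower_norm : ∀ g,
      ((1 - α) / ((eLpNormEssSup m μ).toReal * Real.sqrt D₂ * (1 + β))) ^ 2 * ‖inn g g‖ ≤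
        ‖∫ ω, inn g (X ω) * inn (X ω) g ∂μ‖ := fun g => by
    rw [norm_inn_self]
    refine div_sq_mul_sq_le_of_mul_le_of_sq_le hα.le (norm_nonneg g) hD₂.le (norm_nonneg _)
      (one_sub_mul_norm_le_one_add_mul_norm (hpert g)) ?_
    rw [← norm_inn_self]
    exact norm_inn_self_le_of_eq_integral inn inn_conj_symm hm
      (ae_norm_le_toReal_eLpNormEssSup hmbd) hD₂.le (hprodX g) (hprodY (M g)) (hmint g (M g))
      (hYBessel (M g)) (hM g (M g))
  intro f
  refine ⟨smul_le_of_forall_norm_conj_le (inn_nonneg f) ?_ (sq_nonneg _) fun a => ?_, hXBessel f⟩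
  · exact integral_nonneg fun ω => inn_conj_symm (X ω) f ▸ mul_star_self_nonneg _
  · have := lower_norm (a • f)
    rwa [integral_inn_smul_mul_inn_smul inn inn_smul_left inn_conj_symm (hprodX f), inn_smul_left,
      inn_smul_right inn inn_smul_left inn_conj_symm, ← mul_assoc] at this

/-- If `‖f − M_{m,X,Y} f‖ ≤ α‖f‖ + β‖M_{m,X,Y} f‖` for all `f`, with
`1 − α > 0` and `1 + β > 0`, then `(X, X)` is a continuous biframe with bounds
`((1−α)/(‖m‖_∞·√D₂·(1+β)))²` and `D₁`. -/
theorem biframe_of_multiplier_perturbation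
    {𝒜 H Ω : Type*}
    -- `𝒜` is a unital C*-algebra
    [NormedRing 𝒜] [StarRing 𝒜] [CStarRing 𝒜] [NormedAlgebra ℂ 𝒜] [CompleteSpace 𝒜]
    [PartialOrder 𝒜] [StarOrderedRing 𝒜]
    -- `H` is a Hilbert C*-module over `𝒜`
    [NormedAddCommGroup H] [NormedSpace ℝ H] [CompleteSpace H] [Module 𝒜 H]
    (inn : H → H → 𝒜)
    (inn_add_left : ∀ x y z : H, inn (x + y) z = inn x z + inn y z)
    (inn_smul_left : ∀ (a : 𝒜) (x z : H), inn (a • x) z = a * inn x z)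
    (inn_conj_symm : ∀ x y : H, inn x y = star (inn y x))
    (inn_nonneg : ∀ x : H, 0 ≤ inn x x)
    (inn_definite : ∀ x : H, inn x x = 0 → x = 0)
    (hnorm : ∀ x : H, ‖x‖ = Real.sqrt ‖inn x x‖)
    -- `(Ω, μ)` is a measure space
    [MeasurableSpace Ω] (μ : Measure Ω)
    -- `X, Y : Ω → H` are weakly measurable
    (X Y : Ω → H)
    (hXw : ∀ f : H, AEStronglyMeasurable (fun ω => inn f (X ω)) μ)
    (hYw : ∀ f : H, AEStronglyMeasurable (fun ω => inn f (Y ω)) μ)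
    -- `(X, X)` and `(Y, Y)` are continuous biframe Bessel mappings with bounds `D₁, D₂`
    (D₁ D₂ : ℝ) (hD₁ : 0 < D₁) (hD₂ : 0 < D₂)
    (hXBessel : ∀ f : H, ∫ ω, inn f (X ω) * inn (X ω) f ∂μ ≤ D₁ • inn f f)
    (hYBessel : ∀ f : H, ∫ ω, inn f (Y ω) * inn (Y ω) f ∂μ ≤ D₂ • inn f f)
    -- `m : Ω → ℂ` is an essentially bounded measurable function
    (m : Ω → ℂ) (hm : AEStronglyMeasurable m μ) (hmbd : eLpNormEssSup m μ ≠ ⊤)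
    -- all relevant integrands are Bochner integrable
    (hprodX : ∀ f : H, Integrable (fun ω => inn f (X ω) * inn (X ω) f) μ)
    (hprodY : ∀ f : H, Integrable (fun ω => inn f (Y ω) * inn (Y ω) f) μ)
    (hmint : ∀ f g : H, Integrable (fun ω => m ω • (inn f (X ω) * inn (Y ω) g)) μ)
    -- the continuous biframe Bessel multiplier `M_{m,X,Y}` (weakly defined)
    (M : H → H)
    (hM : ∀ f g : H, inn (M f) g = ∫ ω, m ω • (inn f (X ω) * inn (Y ω) g) ∂μ)
    (α β : ℝ) (hα : 0 < 1 - α) (hβ : 0 < 1 + β)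
    (hpert : ∀ f : H, ‖f - M f‖ ≤ α * ‖f‖ + β * ‖M f‖) :
    ∀ f : H,
      (((1 - α) / ((eLpNormEssSup m μ).toReal * Real.sqrt D₂ * (1 + β))) ^ 2) • inn f f ≤
        ∫ ω, inn f (X ω) * inn (X ω) f ∂μ ∧
      ∫ ω, inn f (X ω) * inn (X ω) f ∂μ ≤ D₁ • inn f f :=
  biframe_of_multiplier_perturbation_general inn inn_smul_left inn_conj_symm inn_nonneg hnorm μ X Y
    D₁ D₂ hD₂ hXBessel hYBessel m hm hmbd hprodX hprodY hmint M hM α β hα hpert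
end

section
/- Let (X, Y) be a continuous biframe for H whose continuous biframe operator S = S_{X,Y} is self-adjoint and invertible with bounded adjointable inverse S⁻¹. Then (X, S⁻¹∘Y) is a dual continuous biframe for H; that is, ⟨f, g⟩ = ∫_Ω ⟨f, X(ω)⟩⟨S⁻¹Y(ω), g⟩ dμ(ω) for all f, g ∈ H. -/
/-! Since `S⁻¹ S = 1`, `⟨f, g⟩ = ⟨S f, (S⁻¹)* g⟩`, and `⟨·, h⟩` may be pulled inside the Bochner
integral defining `S f`: by the C⋆-Cauchy–Schwarz inequality `‖⟨x, h⟩‖ ≤ ‖x‖ ‖h‖` it is a bounded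
additive, hence continuous `ℝ`-linear, map. Cauchy–Schwarz needs `𝒜` to be a genuine C⋆-algebra,
i.e. `star` to be conjugate-linear over `ℂ`, and this is forced by the star order. -/

open MeasureTheory

section StarOrdered

variable {𝒜 : Type*} [NormedRing 𝒜] [StarRing 𝒜] [CStarRing 𝒜] [NormedAlgebra ℂ 𝒜]

theorem star_algebraMap_ofReal (r : ℝ) : star (algebraMap ℂ 𝒜 r) = algebraMap ℂ 𝒜 r := by
  let g : ℝ →+ 𝒜 := (algebraMap ℂ 𝒜).toAddMonoidHom.comp Complex.ofRealHom.toAddMonoidHom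
  have hg : Continuous g := (continuous_algebraMap ℂ 𝒜).comp Complex.continuous_ofReal
  let f : ℝ →+ 𝒜 := starAddEquiv.toAddMonoidHom.comp g
  have h := ContinuousLinearMap.ext_ring
    (f := f.toRealLinearMap (continuous_star.comp hg))
    (g := g.toRealLinearMap hg) (by simp [f, g])
  exact DFunLike.congr_fun h r

variable [PartialOrder 𝒜] [StarOrderedRing 𝒜]

theorem star_algebraMap_I : star (algebraMap ℂ 𝒜 Complex.I) = -algebraMap ℂ 𝒜 Complex.I := by
  set j := algebraMap ℂ 𝒜 Complex.I
  have hjj : j * j = -1 := by rw [← map_mul, Complex.I_mul_I, map_neg, map_one]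
  have hkk : star j * star j = -1 := by rw [← star_mul, hjj, star_neg, star_one]
  have hcomm : star j * j = j * star j := (Algebra.commutes Complex.I (star j)).symm
  set v := j * star j
  have hv : star v = v := by rw [star_mul, star_star]
  have hvv : v * v = 1 := by
    calc v * v = j * (star j * j) * star j := by simp only [v, mul_assoc]
      _ = (j * j) * (star j * star j) := by rw [hcomm]; simp only [v, mul_assoc]
      _ = 1 := by rw [hjj, hkk, neg_mul_neg, one_mul]
  -- `j + star j` is self-adjoint with square `-(1 - v) ^ 2`, and squares are nonnegative
  have hsq : star (j + star j) * (j + star j) = -(star (1 - v) * (1 - v)) := by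
    rw [star_add, star_star, star_sub, star_one, hv]
    calc (star j + j) * (j + star j) = star j * j + star j * star j + j * j + j * star j := by
          noncomm_ring
      _ = -((1 - v) * (1 - v)) := by
          rw [hcomm, hkk, hjj, sub_mul, mul_sub, mul_sub, hvv]
          noncomm_ring
  have h0 : star (j + star j) * (j + star j) = 0 :=
    le_antisymm (hsq ▸ neg_nonpos.mpr (star_mul_self_nonneg _)) (star_mul_self_nonneg _)
  rwa [CStarRing.star_mul_self_eq_zero_iff, add_comm, add_eq_zero_iff_eq_neg] at h0

theorem star_algebraMap_complex (z : ℂ) : star (algebraMap ℂ 𝒜 z) = algebraMap ℂ 𝒜 (star z) := by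
  have hz : star z = z.re + z.im * -Complex.I := by apply Complex.ext <;> simp
  conv_lhs => rw [← Complex.re_add_im z]
  rw [hz, map_add, map_add, map_mul, map_mul, star_add, star_mul, star_algebraMap_I,
    star_algebraMap_ofReal, star_algebraMap_ofReal, map_neg, neg_mul, mul_neg, ← map_mul,
    ← map_mul, mul_comm]

-- The order is what rules out a `ℂ`-linear involution, such as the trivial one on `ℂ`,
-- which also satisfies the C⋆-identity.
theorem starModule_complex : StarModule ℂ 𝒜 :=
  ⟨fun z a => by
    rw [Algebra.smul_def, star_mul, star_algebraMap_complex, ← Algebra.commutes,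
      ← Algebra.smul_def]⟩

abbrev CStarAlgebra.ofStarOrderedRing [CompleteSpace 𝒜] : CStarAlgebra 𝒜 :=
  { ‹NormedRing 𝒜›, ‹StarRing 𝒜›, ‹CStarRing 𝒜›, ‹NormedAlgebra ℂ 𝒜›, ‹CompleteSpace 𝒜›,
    starModule_complex with }

end StarOrdered

structure IsCStarSemiInner {𝒜 H : Type*} [Ring 𝒜] [StarRing 𝒜] [PartialOrder 𝒜] [AddCommGroup H]
    [Module 𝒜 H] (inn : H → H → 𝒜) : Prop where
  add_left : ∀ x y z : H, inn (x + y) z = inn x z + inn y z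
  smul_left : ∀ (a : 𝒜) (x z : H), inn (a • x) z = a * inn x z
  conj_symm : ∀ x y : H, inn x y = star (inn y x)
  nonneg : ∀ x : H, 0 ≤ inn x x

namespace IsCStarSemiInner

section Algebra

variable {𝒜 H : Type*} [Ring 𝒜] [StarRing 𝒜] [PartialOrder 𝒜] [AddCommGroup H] [Module 𝒜 H]
  {inn : H → H → 𝒜} (hinn : IsCStarSemiInner inn)
include hinn

def leftHom (z : H) : H →+ 𝒜 := AddMonoidHom.mk' (inn · z) fun x y => hinn.add_left x y z

theorem sub_left (x y z : H) : inn (x - y) z = inn x z - inn y z := map_sub (hinn.leftHom z) x y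

theorem zero_right (x : H) : inn x 0 = 0 := by
  rw [hinn.conj_symm, show inn 0 x = 0 from map_zero (hinn.leftHom x), star_zero]

theorem sub_right (x y z : H) : inn z (x - y) = inn z x - inn z y := by
  rw [hinn.conj_symm z, hinn.sub_left, star_sub, ← hinn.conj_symm, ← hinn.conj_symm]

theorem smul_right (a : 𝒜) (x z : H) : inn z (a • x) = inn z x * star a := by
  rw [hinn.conj_symm z, hinn.smul_left, star_mul, ← hinn.conj_symm]

theorem isSelfAdjoint_self (x : H) : IsSelfAdjoint (inn x x) := (hinn.conj_symm x x).symm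

theorem sub_smul_self (a : 𝒜) (x y : H) :
    inn (x - a • y) (x - a • y) =
      inn x x - a * inn y x - inn x y * star a + a * inn y y * star a := by
  rw [hinn.sub_left, hinn.sub_right, hinn.sub_right, hinn.smul_left, hinn.smul_left,
    hinn.smul_right, hinn.smul_right]
  noncomm_ring

end Algebra

section CStar

variable {𝒜 H : Type*} [CStarAlgebra 𝒜] [PartialOrder 𝒜] [StarOrderedRing 𝒜] [AddCommGroup H]
  [Module 𝒜 H] {inn : H → H → 𝒜} (hinn : IsCStarSemiInner inn)
include hinn

theorem norm_mul_self_le (x y : H) (hy : 0 < ‖inn y y‖) :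
    ‖inn x y‖ * ‖inn x y‖ ≤ ‖inn x x‖ * ‖inn y y‖ := by
  set b := inn x y
  set K := ‖inn y y‖
  -- positivity of `⟨x - a • y, x - a • y⟩` at `a = K⁻¹ • b`, with `b ⟨y, y⟩ b* ≤ K • b b*`
  have hle : K⁻¹ • (b * star b) ≤ inn x x := by
    have h0 := hinn.sub_smul_self (K⁻¹ • b) x y
    rw [hinn.conj_symm y x] at h0
    rw [← sub_nonneg]
    calc (0 : 𝒜) ≤ inn x x - K⁻¹ • (b * star b) - K⁻¹ • (b * star b)
          + (K⁻¹ * K⁻¹) • (b * inn y y * star b) := by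
          have := hinn.nonneg (x - (K⁻¹ • b) • y)
          rw [h0] at this
          simpa only [star_smul, star_trivial, smul_mul_assoc, mul_smul_comm, smul_smul,
            mul_assoc] using this
      _ ≤ inn x x - K⁻¹ • (b * star b) - K⁻¹ • (b * star b)
          + (K⁻¹ * K⁻¹) • (K • (b * star b)) := by
          gcongr
          exact CStarAlgebra.star_right_conjugate_le_norm_smul (hinn.isSelfAdjoint_self y)
      _ = inn x x - K⁻¹ • (b * star b) := by
          rw [smul_smul, mul_assoc, inv_mul_cancel₀ hy.ne', mul_one]
          abel
  have hnorm_le : K⁻¹ * (‖b‖ * ‖b‖) ≤ ‖inn x x‖ := by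
    rw [← CStarRing.norm_self_mul_star, ← Real.norm_of_nonneg (inv_nonneg.mpr hy.le), ← norm_smul]
    exact CStarAlgebra.norm_le_norm_of_nonneg_of_le
      (smul_nonneg (inv_nonneg.mpr hy.le) (mul_star_self_nonneg b)) hle
  rw [inv_mul_le_iff₀ hy] at hnorm_le
  linarith

end CStar

section Normed

variable {𝒜 H : Type*} [CStarAlgebra 𝒜] [PartialOrder 𝒜] [StarOrderedRing 𝒜]
  [NormedAddCommGroup H] [Module 𝒜 H] {inn : H → H → 𝒜} (hinn : IsCStarSemiInner inn)
  (hnorm : ∀ x : H, ‖x‖ = √‖inn x x‖)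
include hinn hnorm

theorem norm_le (x y : H) : ‖inn x y‖ ≤ ‖x‖ * ‖y‖ := by
  rcases (norm_nonneg (inn y y)).eq_or_lt with hy | hy
  · have hy0 : y = 0 := norm_eq_zero.mp (by rw [hnorm, ← hy, Real.sqrt_zero])
    rw [hy0, hinn.zero_right, norm_zero, norm_zero, mul_zero]
  · rw [hnorm x, hnorm y, ← Real.sqrt_mul (norm_nonneg _)]
    exact Real.le_sqrt_of_sq_le ((sq _).trans_le (hinn.norm_mul_self_le x y hy))

variable [NormedSpace ℝ H]

noncomputable def leftCLM (z : H) : H →L[ℝ] 𝒜 :=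
  (hinn.leftHom z).toRealLinearMap <| AddMonoidHomClass.continuous_of_bound _ ‖z‖ fun x =>
    (hinn.norm_le hnorm x z).trans_eq (mul_comm _ _)

theorem integral_left [CompleteSpace H] {Ω : Type*} [MeasurableSpace Ω] {μ : Measure Ω}
    {F : Ω → H} (hF : Integrable F μ) (z : H) :
    ∫ ω, inn (F ω) z ∂μ = inn (∫ ω, F ω ∂μ) z :=
  (hinn.leftCLM hnorm z).integral_comp_comm hF

end Normed

end IsCStarSemiInner

theorem dual_biframe_X_SinvY_general
    {𝒜 H Ω : Type*}
    -- `𝒜` is a unital C*-algebra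
    [NormedRing 𝒜] [StarRing 𝒜] [CStarRing 𝒜] [NormedAlgebra ℂ 𝒜] [CompleteSpace 𝒜]
    [PartialOrder 𝒜] [StarOrderedRing 𝒜]
    -- `H` is a Hilbert C*-module over `𝒜`
    [NormedAddCommGroup H] [NormedSpace ℝ H] [CompleteSpace H] [Module 𝒜 H]
    (inn : H → H → 𝒜)
    (inn_add_left : ∀ x y z : H, inn (x + y) z = inn x z + inn y z)
    (inn_smul_left : ∀ (a : 𝒜) (x z : H), inn (a • x) z = a * inn x z)
    (inn_conj_symm : ∀ x y : H, inn x y = star (inn y x))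
    (inn_nonneg : ∀ x : H, 0 ≤ inn x x)
    (hnorm : ∀ x : H, ‖x‖ = Real.sqrt ‖inn x x‖)
    -- `(Ω, μ)` is a measure space
    [MeasurableSpace Ω] (μ : Measure Ω)
    (X Y : Ω → H)
    -- the continuous biframe operator `S = S_{X,Y}` (Bochner integral)
    (hXYint : ∀ f : H, Integrable (fun ω => inn f (X ω) • Y ω) μ)
    (S : H → H)
    (hS : ∀ f : H, S f = ∫ ω, inn f (X ω) • Y ω ∂μ)
    -- `S` is invertible with bounded adjointable inverse `Sinv`
    (Sinv : H → H)
    (hSinv₁ : ∀ f : H, Sinv (S f) = f)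
    (Sinvs : H → H)
    (hSinvadj : ∀ f g : H, inn (Sinv f) g = inn f (Sinvs g)) :
    ∀ f g : H, inn f g = ∫ ω, inn f (X ω) * inn (Sinv (Y ω)) g ∂μ := by
  let _ : CStarAlgebra 𝒜 := CStarAlgebra.ofStarOrderedRing
  have hinn : IsCStarSemiInner inn := ⟨inn_add_left, inn_smul_left, inn_conj_symm, inn_nonneg⟩
  intro f g
  calc inn f g = inn (S f) (Sinvs g) := by rw [← hSinvadj, hSinv₁]
    _ = ∫ ω, inn (inn f (X ω) • Y ω) (Sinvs g) ∂μ := by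
      rw [hS, hinn.integral_left hnorm (hXYint f)]
    _ = ∫ ω, inn f (X ω) * inn (Sinv (Y ω)) g ∂μ := by simp_rw [inn_smul_left, hSinvadj]

/-- If the biframe operator `S = S_{X,Y}` of a continuous biframe `(X, Y)`
is self-adjoint and invertible with bounded adjointable inverse, then `(X, S⁻¹∘Y)` is a dual
continuous biframe: `⟨f, g⟩ = ∫ ⟨f, X(ω)⟩⟨S⁻¹Y(ω), g⟩ dμ`. -/
theorem dual_biframe_X_SinvY
    {𝒜 H Ω : Type*}
    -- `𝒜` is a unital C*-algebra
    [NormedRing 𝒜] [StarRing 𝒜] [CStarRing 𝒜] [NormedAlgebra ℂ 𝒜] [CompleteSpace 𝒜]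
    [PartialOrder 𝒜] [StarOrderedRing 𝒜]
    -- `H` is a Hilbert C*-module over `𝒜`
    [NormedAddCommGroup H] [NormedSpace ℝ H] [CompleteSpace H] [Module 𝒜 H]
    (inn : H → H → 𝒜)
    (inn_add_left : ∀ x y z : H, inn (x + y) z = inn x z + inn y z)
    (inn_smul_left : ∀ (a : 𝒜) (x z : H), inn (a • x) z = a * inn x z)
    (inn_conj_symm : ∀ x y : H, inn x y = star (inn y x))
    (inn_nonneg : ∀ x : H, 0 ≤ inn x x)
    (inn_definite : ∀ x : H, inn x x = 0 → x = 0)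
    (hnorm : ∀ x : H, ‖x‖ = Real.sqrt ‖inn x x‖)
    -- `(Ω, μ)` is a measure space
    [MeasurableSpace Ω] (μ : Measure Ω)
    -- `X, Y : Ω → H` are weakly measurable
    (X Y : Ω → H)
    (hXw : ∀ f : H, AEStronglyMeasurable (fun ω => inn f (X ω)) μ)
    (hYw : ∀ f : H, AEStronglyMeasurable (fun ω => inn f (Y ω)) μ)
    (A B : ℝ) (hA : 0 < A) (hAB : A ≤ B)
    -- `(X, Y)` is a continuous biframe with bounds `A, B`
    (hframe : ∀ f : H,
      A • inn f f ≤ ∫ ω, inn f (X ω) * inn (Y ω) f ∂μ ∧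
      ∫ ω, inn f (X ω) * inn (Y ω) f ∂μ ≤ B • inn f f)
    -- the continuous biframe operator `S = S_{X,Y}` (Bochner integral)
    (hXYint : ∀ f : H, Integrable (fun ω => inn f (X ω) • Y ω) μ)
    (S : H → H)
    (hS : ∀ f : H, S f = ∫ ω, inn f (X ω) • Y ω ∂μ)
    -- `S` is self-adjoint
    (hSsa : ∀ f g : H, inn (S f) g = inn f (S g))
    -- `S` is invertible with bounded adjointable inverse `Sinv`
    (Sinv : H → H) (hSinvc : Continuous Sinv)
    (hSinv₁ : ∀ f : H, Sinv (S f) = f) (hSinv₂ : ∀ f : H, S (Sinv f) = f)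
    (Sinvs : H → H)
    (hSinvadj : ∀ f g : H, inn (Sinv f) g = inn f (Sinvs g))
    (hdint : ∀ f g : H, Integrable (fun ω => inn f (X ω) * inn (Sinv (Y ω)) g) μ) :
    ∀ f g : H, inn f g = ∫ ω, inn f (X ω) * inn (Sinv (Y ω)) g ∂μ :=
  dual_biframe_X_SinvY_general inn inn_add_left inn_smul_left inn_conj_symm inn_nonneg hnorm μ X Y
    hXYint S hS Sinv hSinv₁ Sinvs hSinvadj
end
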